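/- Let G be a graph and G' the graph obtained by adding, for each vertex a of G, a new vertex e_{ab} of each edge {a,b} subdividing it once (so edges of G become paths of length 2), plus three new mutually adjacent vertices t, t₁, t₂ with t additionally adjacent to every original vertex of G. If G is nonempty, then t is the unique vertex of G' of degree greater than 2 that lies on a 3-cycle, and the original vertices of G are exactly the vertices adjacent to t that lie on no 3-cycle. -/

import Mathlib

/-- Auxiliary relation for the graph `G'`: each edge `{a,b}` of `G` is subdivided
once by a new vertex, and three new mutually adjacent vertices `t = 0`, `t₁ = 1`,
`t₂ = 2` are added, with `t` moreover adjacent to every original vertex of `G`. -/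
def GprimeRel {α : Type} (G : SimpleGraph α) :
    (α ⊕ ({e : Sym2 α // e ∈ G.edgeSet} ⊕ Fin 3)) →
    (α ⊕ ({e : Sym2 α // e ∈ G.edgeSet} ⊕ Fin 3)) → Prop
  | Sum.inl a, Sum.inr (Sum.inl e) => a ∈ e.val
  | Sum.inl _, Sum.inr (Sum.inr t) => t = 0
  | Sum.inr (Sum.inr _), Sum.inr (Sum.inr _) => True
  | _, _ => False

/-- The graph `G'` obtained from `G` by the diameter-reduction construction. -/
def Gprime {α : Type} (G : SimpleGraph α) :
    SimpleGraph (α ⊕ ({e : Sym2 α // e ∈ G.edgeSet} ⊕ Fin 3)) :=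
  SimpleGraph.fromRel (GprimeRel G)

/-- `v` lies on a 3-cycle of the graph `H`. -/
def InTriangle {V : Type*} (H : SimpleGraph V) (v : V) : Prop :=
  ∃ u w, H.Adj v u ∧ H.Adj v w ∧ H.Adj u w

namespace Gprime

variable {α : Type} (G : SimpleGraph α)

lemma adj_tri_tri (i j : Fin 3) :
    (Gprime G).Adj (Sum.inr (Sum.inr i)) (Sum.inr (Sum.inr j)) ↔ i ≠ j := by
  simp [Gprime, GprimeRel]

lemma adj_inl_tri (a : α) (i : Fin 3) :
    (Gprime G).Adj (Sum.inl a) (Sum.inr (Sum.inr i)) ↔ i = 0 := by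
  simp [Gprime, GprimeRel]

/- Away from `t₁, t₂` the graph `G'` is bipartite, with parts `V(G)` and `E(G) ∪ {t}`;
and the only neighbours of `tᵢ` are the other two vertices of `{t, t₁, t₂}`. -/
lemma inTriangle_iff (v : α ⊕ ({e : Sym2 α // e ∈ G.edgeSet} ⊕ Fin 3)) :
    InTriangle (Gprime G) v ↔ ∃ i, v = Sum.inr (Sum.inr i) := by
  constructor
  · rintro ⟨u, w, hvu, hvw, huw⟩
    rcases v with a | e | i
    all_goals
      rcases u with b | f | j <;> rcases w with c | g | k <;>
        simp [Gprime, GprimeRel] at hvu hvw huw ⊢ <;> simp_all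
  · rintro ⟨i, rfl⟩
    obtain ⟨j, k, hij, hik, hjk⟩ : ∃ j k : Fin 3, i ≠ j ∧ i ≠ k ∧ j ≠ k := by
      revert i; decide
    exact ⟨_, _, (adj_tri_tri G i j).2 hij, (adj_tri_tri G i k).2 hik, (adj_tri_tri G j k).2 hjk⟩

lemma neighborSet_tri_of_ne_zero {i : Fin 3} (hi : i ≠ 0) :
    (Gprime G).neighborSet (Sum.inr (Sum.inr i)) ⊆
      (fun j => Sum.inr (Sum.inr j)) '' {j | j ≠ i} := by
  rintro (a | e | j) h
  · exact absurd ((adj_inl_tri G a i).1 h.symm) hi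
  · simp [Gprime, GprimeRel] at h
  · exact ⟨j, Ne.symm ((adj_tri_tri G i j).1 h), rfl⟩

lemma card_le_two_of_subset_neighborSet_tri {i : Fin 3} (hi : i ≠ 0)
    {s : Finset (α ⊕ ({e : Sym2 α // e ∈ G.edgeSet} ⊕ Fin 3))}
    (hs : ↑s ⊆ (Gprime G).neighborSet (Sum.inr (Sum.inr i))) : s.card ≤ 2 := by
  classical
  let tri : Fin 3 ↪ α ⊕ ({e : Sym2 α // e ∈ G.edgeSet} ⊕ Fin 3) :=
    ⟨fun j => Sum.inr (Sum.inr j), fun j k h => by simpa using h⟩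
  have hsub : s ⊆ (Finset.univ.erase i).map tri := by
    intro x hx
    obtain ⟨j, hj, rfl⟩ := neighborSet_tri_of_ne_zero G hi (hs hx)
    exact Finset.mem_map_of_mem tri (Finset.mem_erase.2 ⟨hj, Finset.mem_univ j⟩)
  calc s.card ≤ ((Finset.univ.erase i).map tri).card := Finset.card_le_card hsub
    _ = 2 := by simp

lemma exists_three_neighbors_tri_zero [Nonempty α] :
    ∃ s : Finset (α ⊕ ({e : Sym2 α // e ∈ G.edgeSet} ⊕ Fin 3)),
      3 ≤ s.card ∧ ↑s ⊆ (Gprime G).neighborSet (Sum.inr (Sum.inr 0)) := by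
  classical
  refine ⟨{Sum.inl (Classical.arbitrary α), Sum.inr (Sum.inr 1), Sum.inr (Sum.inr 2)}, ?_, ?_⟩
  · rw [Finset.card_insert_of_notMem (by simp), Finset.card_pair (by simp)]
  · intro x hx
    simp only [Finset.coe_insert, Finset.coe_singleton, Set.mem_insert_iff,
      Set.mem_singleton_iff] at hx
    rcases hx with rfl | rfl | rfl
    · exact ((adj_inl_tri G _ 0).2 rfl).symm
    all_goals exact (adj_tri_tri G _ _).2 (by decide)

end Gprime

/-- If `G` is nonempty, then `t` is the unique vertex of `G'` of degree `> 2` lying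
on a 3-cycle, and the original vertices of `G` are exactly the vertices of `G'`
adjacent to `t` that lie on no 3-cycle. -/
theorem Gprime_definability {α : Type} [Nonempty α] (G : SimpleGraph α) :
    (∀ v, ((∃ s : Finset (α ⊕ ({e : Sym2 α // e ∈ G.edgeSet} ⊕ Fin 3)),
          3 ≤ s.card ∧ ↑s ⊆ (Gprime G).neighborSet v) ∧ InTriangle (Gprime G) v) ↔
        v = Sum.inr (Sum.inr 0)) ∧
    (∀ v, ((Gprime G).Adj v (Sum.inr (Sum.inr 0)) ∧ ¬ InTriangle (Gprime G) v) ↔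
        ∃ a : α, v = Sum.inl a) := by
  refine ⟨fun v => ⟨?_, ?_⟩, fun v => ⟨?_, ?_⟩⟩
  · rintro ⟨⟨s, hs, hsub⟩, htri⟩
    obtain ⟨i, rfl⟩ := (Gprime.inTriangle_iff G v).1 htri
    by_contra hi
    have hcard := Gprime.card_le_two_of_subset_neighborSet_tri G (i := i) (by simpa using hi) hsub
    omega
  · rintro rfl
    exact ⟨Gprime.exists_three_neighbors_tri_zero G, (Gprime.inTriangle_iff G _).2 ⟨0, rfl⟩⟩
  · rintro ⟨hadj, htri⟩
    rw [Gprime.inTriangle_iff] at htri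
    rcases v with a | e | i
    · exact ⟨a, rfl⟩
    · simp [Gprime, GprimeRel] at hadj
    · exact absurd ⟨i, rfl⟩ htri
  · rintro ⟨a, rfl⟩
    refine ⟨(Gprime.adj_inl_tri G a 0).2 rfl, ?_⟩
    simp [Gprime.inTriangle_iff]
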